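/- Let I be a monomial ideal of S = K[x_1,…,x_n]. Then I^{[2]} = I*I, and more generally I^{[k]} = I^{[k-1]} * I for all k ≥ 2. -/

import Mathlib

open MvPolynomial

variable {K : Type*} [Field K] {σ : Type*}

/-- An ideal of `MvPolynomial σ K` is a monomial ideal if it is generated by monomials. -/
def IsMonomialIdeal (I : Ideal (MvPolynomial σ K)) : Prop :=
  ∃ A : Set (σ →₀ ℕ), I = Ideal.span ((fun a => (monomial a (1 : K))) '' A)

/-- The exponent vectors of the minimal monomial generators of a monomial ideal:
the monomials in `I` that are minimal with respect to divisibility. -/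
def minimalGenerators (I : Ideal (MvPolynomial σ K)) : Set (σ →₀ ℕ) :=
  {a | (monomial a (1 : K)) ∈ I ∧
    ∀ b : σ →₀ ℕ, (monomial b (1 : K)) ∈ I → b ≤ a → b = a}

/-- `p` is a minimal monomial generator of `I`. -/
def IsMinimalGenerator (I : Ideal (MvPolynomial σ K)) (p : MvPolynomial σ K) : Prop :=
  ∃ c ∈ minimalGenerators I, p = monomial c (1 : K)

/-- The `k`-th matching power of `I`: the ideal generated by all products
`u₁ ⋯ u_k` where `u₁, …, u_k` is a regular sequence of monomials contained in `I`. -/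
noncomputable def matchingPower (I : Ideal (MvPolynomial σ K)) (k : ℕ) : Ideal (MvPolynomial σ K) :=
  Ideal.span {p | ∃ us : List (MvPolynomial σ K), us.length = k ∧
    (∀ u ∈ us, u ∈ I ∧ ∃ a : σ →₀ ℕ, u = monomial a (1 : K)) ∧
    RingTheory.Sequence.IsRegular (MvPolynomial σ K) us ∧ p = us.prod}

/-- The monomial grade `ν(I)`: the largest `k` such that `I^[k] ≠ 0`. -/
noncomputable def monomialGrade (I : Ideal (MvPolynomial σ K)) : ℕ :=
  sSup {k | 1 ≤ k ∧ matchingPower I k ≠ ⊥}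

/-- The matching product `I * J`. -/
noncomputable def matchingProduct (I J : Ideal (MvPolynomial σ K)) : Ideal (MvPolynomial σ K) :=
  Ideal.span {p | ∃ a b : σ →₀ ℕ, (monomial a (1 : K)) ∈ I ∧ (monomial b (1 : K)) ∈ J ∧
    RingTheory.Sequence.IsRegular (MvPolynomial σ K)
      [monomial a (1 : K), monomial b (1 : K)] ∧
    p = monomial a (1 : K) * monomial b (1 : K)}

/-- `deg_{x_i}(I)`, the maximal exponent of `x_i` in a minimal generator of `I`. -/
noncomputable def degX (I : Ideal (MvPolynomial σ K)) (i : σ) : ℕ :=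
  sSup {d | ∃ a ∈ minimalGenerators I, a i = d}

/-- The initial degree of `I`: minimal degree of a minimal monomial generator. -/
noncomputable def indeg [Fintype σ] (I : Ideal (MvPolynomial σ K)) : ℕ :=
  sInf ((fun a : σ →₀ ℕ => ∑ i, a i) '' minimalGenerators I)

/-- The depth of `S/I` where `S = MvPolynomial σ K`: the maximal length of a regular
sequence on `S/I` consisting of elements of the graded maximal ideal `(x_1, …, x_n)`. -/
noncomputable def quotDepth [Fintype σ] (I : Ideal (MvPolynomial σ K)) : ℕ :=
  sSup {k | ∃ rs : List (MvPolynomial σ K), rs.length = k ∧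
    (∀ r ∈ rs, r ∈ Ideal.span (Set.range (X : σ → MvPolynomial σ K))) ∧
    RingTheory.Sequence.IsRegular (MvPolynomial σ K ⧸ I) rs}

/-- The index type of the variables `x_{i,j}`, `1 ≤ j ≤ m i`, of a polarization ring. -/
abbrev PolIdx (m : σ → ℕ) : Type _ := (i : σ) × Fin (m i)

/-- The polarization of the monomial `x^a`, inside `K[x_{i,j} : 1 ≤ j ≤ m i]`. -/
noncomputable def polarMon [Fintype σ] (m : σ → ℕ) (a : σ →₀ ℕ) :
    MvPolynomial (PolIdx m) K :=
  ∏ p : PolIdx m, if (p.2 : ℕ) < a p.1 then X p else 1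

/-- The polarization of a monomial ideal `I`, inside `K[x_{i,j} : 1 ≤ j ≤ m i]`:
the ideal generated by the polarizations of the minimal generators of `I`. -/
noncomputable def polarizationIn [Fintype σ] (m : σ → ℕ) (I : Ideal (MvPolynomial σ K)) :
    Ideal (MvPolynomial (PolIdx m) K) :=
  Ideal.span ((polarMon (K := K) m) '' minimalGenerators I)

/-- The normalized depth function
`g_I(k) = depth(S/I^[k]) + |deg I| - n - (indeg(I^[k]) - 1)`. -/
noncomputable def gFun [Fintype σ] (I : Ideal (MvPolynomial σ K)) (k : ℕ) : ℤ :=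
  (quotDepth (matchingPower I k) : ℤ) + (∑ i, (degX I i : ℤ)) - Fintype.card σ
    - ((indeg (matchingPower I k) : ℤ) - 1)

/-- The edge ideal of a finite simple graph. -/
noncomputable def edgeIdeal {n : ℕ} (K : Type*) [Field K] (G : SimpleGraph (Fin n)) :
    Ideal (MvPolynomial (Fin n) K) :=
  Ideal.span {p | ∃ i j : Fin n, G.Adj i j ∧ p = X i * X j}

/-- The matching number of a finite simple graph: the maximal size of a set of
pairwise disjoint edges. -/
noncomputable def matchingNumber {n : ℕ} (G : SimpleGraph (Fin n)) : ℕ :=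
  sSup {k | ∃ s : Finset (Sym2 (Fin n)), s.card = k ∧ ↑s ⊆ G.edgeSet ∧
    ∀ e ∈ s, ∀ f ∈ s, e ≠ f → ∀ v : Fin n, v ∈ e → v ∉ f}

/-- The edge ideal of a vertex-weighted oriented graph with directed edge set `E`
and weight function `w`. -/
noncomputable def weightedEdgeIdeal {n : ℕ} (K : Type*) [Field K] (E : Set (Fin n × Fin n))
    (w : Fin n → ℕ) : Ideal (MvPolynomial (Fin n) K) :=
  Ideal.span {p | ∃ q ∈ E, p = X q.1 * X q.2 ^ w q.2}


section Aux
open RingTheory.Sequence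

variable {K : Type*} [Field K] {σ : Type*}

private lemma aux_smul_top {R : Type*} [CommRing R] (I : Ideal R) :
    (I • ⊤ : Submodule R R) = I := by rw [Ideal.smul_eq_mul, Ideal.mul_top]

private lemma aux_quot_reg {R : Type*} [CommRing R] (I : Ideal R) (r : R) :
    IsSMulRegular (R ⧸ I) r ↔ ∀ x : R, r * x ∈ I → x ∈ I := by
  constructor
  · intro h x hx
    have h0 : r • (Submodule.Quotient.mk x : R ⧸ I) = r • (Submodule.Quotient.mk 0 : R ⧸ I) := by
      rw [← Submodule.Quotient.mk_smul, ← Submodule.Quotient.mk_smul, Submodule.Quotient.eq]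
      simpa [smul_eq_mul] using hx
    have := h h0
    rw [Submodule.Quotient.eq] at this
    simpa using this
  · intro h a b hab
    obtain ⟨x, rfl⟩ := Submodule.Quotient.mk_surjective I a
    obtain ⟨y, rfl⟩ := Submodule.Quotient.mk_surjective I b
    simp only at hab
    rw [← Submodule.Quotient.mk_smul, ← Submodule.Quotient.mk_smul, Submodule.Quotient.eq] at hab
    rw [Submodule.Quotient.eq]
    exact h (x - y) (by rw [mul_sub]; simpa [smul_eq_mul] using hab)

private lemma aux_mon_mem {A : Set (σ →₀ ℕ)} {c : σ →₀ ℕ} :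
    monomial c (1 : K) ∈ Ideal.span ((fun a => monomial a (1 : K)) '' A) ↔ ∃ a ∈ A, a ≤ c := by
  classical
  rw [mem_ideal_span_monomial_image]
  simp [support_monomial]

private lemma aux_one_not_mem {A : Set (σ →₀ ℕ)} (h0 : ∀ a ∈ A, a ≠ 0) :
    (1 : MvPolynomial σ K) ∉ Ideal.span ((fun a => monomial a (1 : K)) '' A) := by
  intro h
  obtain ⟨a, ha, hle⟩ := (aux_mon_mem (K := K)).mp (by rw [monomial_zero', C_1]; exact h)
  exact h0 a ha (nonpos_iff_eq_zero.mp hle)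

private lemma aux_ofList (l : List (σ →₀ ℕ)) :
    Ideal.ofList (l.map (fun d => monomial d (1 : K))) =
      Ideal.span ((fun a => monomial a (1 : K)) '' {a | a ∈ l}) := by
  show Ideal.span _ = Ideal.span _
  congr 1
  ext p
  simp [eq_comm]

private lemma aux_colon {A : Set (σ →₀ ℕ)} {e : σ →₀ ℕ}
    (hd : ∀ a ∈ A, Disjoint a.support e.support) (x : MvPolynomial σ K)
    (hx : monomial e 1 * x ∈ Ideal.span ((fun a => monomial a (1 : K)) '' A)) :
    x ∈ Ideal.span ((fun a => monomial a (1 : K)) '' A) := by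
  rw [mem_ideal_span_monomial_image] at hx ⊢
  intro c hc
  have hsupp : (monomial e (1 : K) * x).support = x.support.map (addRightEmbedding e) := by
    rw [mul_comm]
    exact AddMonoidAlgebra.support_coeff_mul_single x 1 (by simp) e
  have hc' : c + e ∈ (monomial e (1 : K) * x).support := by
    rw [hsupp]
    exact Finset.mem_map_of_mem _ hc
  obtain ⟨a, ha, hle⟩ := hx _ hc'
  refine ⟨a, ha, ?_⟩
  rw [Finsupp.le_def] at hle ⊢
  intro s
  by_cases hs : s ∈ e.support
  · have : a s = 0 := Finsupp.notMem_support_iff.mp (Finset.disjoint_right.mp (hd a ha) hs)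
    simp [this]
  · have he : e s = 0 := Finsupp.notMem_support_iff.mp hs
    have := hle s
    rw [Finsupp.add_apply, he, add_zero] at this
    exact this


private lemma aux_isRegular_iff (ds : List (σ →₀ ℕ)) :
    RingTheory.Sequence.IsRegular (MvPolynomial σ K) (ds.map (fun d => monomial d (1 : K))) ↔
      (∀ d ∈ ds, d ≠ 0) ∧ ds.Pairwise (fun a b => Disjoint a.support b.support) := by
  rw [RingTheory.Sequence.isRegular_iff]
  constructor
  · rintro ⟨hw, htop⟩
    have hw' := (RingTheory.Sequence.isWeaklyRegular_iff _ _).mp hw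
    have h0 : ∀ d ∈ ds, d ≠ 0 := by
      intro d hd hd0
      apply htop
      have h1 : (1 : MvPolynomial σ K) ∈
          Ideal.ofList (ds.map fun d => monomial d (1 : K)) := by
        apply Ideal.subset_span
        have : monomial d (1 : K) ∈ ds.map (fun d => monomial d (1 : K)) :=
          List.mem_map_of_mem hd
        rw [hd0, monomial_zero', C_1] at this
        exact this
      have heq : Ideal.ofList (ds.map fun d => monomial d (1 : K)) = ⊤ :=
        (Ideal.eq_top_iff_one _).mpr h1
      rw [heq, aux_smul_top]
    refine ⟨h0, ?_⟩
    rw [List.pairwise_iff_getElem]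
    have key : ∀ j, ∀ (hj : j < ds.length), ∀ i, ∀ (hij : i < j),
        Disjoint (ds[i]'(lt_trans hij hj)).support (ds[j]'hj).support := by
      intro j
      induction j using Nat.strong_induction_on with
      | _ j IH =>
        intro hj i hij
        by_contra hnd
        have hrj := hw' j (by simpa using hj)
        rw [List.getElem_map, ← List.map_take, aux_ofList, aux_smul_top, aux_quot_reg] at hrj
        obtain ⟨t, hti, htj⟩ := Finset.not_disjoint_iff.mp hnd
        set a := ds[i]'(lt_trans hij hj) with ha_def
        set e := ds[j]'hj with he_def
        have hin : monomial e (1 : K) * monomial (a - e) 1 ∈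
            Ideal.span ((fun b => monomial b (1 : K)) '' {b | b ∈ ds.take j}) := by
          rw [monomial_mul, mul_one]
          refine aux_mon_mem.mpr ⟨a, ?_, ?_⟩
          · exact List.mem_take_iff_getElem.mpr ⟨i, by omega, rfl⟩
          · rw [Finsupp.le_def]
            intro s
            rw [Finsupp.add_apply, Finsupp.tsub_apply]
            omega
        obtain ⟨a', ha', hlea⟩ := aux_mon_mem.mp (hrj _ hin)
        obtain ⟨i', hi'len, hgi⟩ := List.mem_iff_getElem.mp ha'
        have hi'j : i' < j := by
          have := hi'len
          simp [List.length_take] at this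
          omega
        rw [List.getElem_take] at hgi
        have hlea' : a' ≤ a := le_trans hlea tsub_le_self
        by_cases hii : i' = i
        · have ha'a : a' = a := by subst hii; exact hgi.symm
          have h3 : a' t ≤ a t - e t := by
            simpa [Finsupp.tsub_apply] using (Finsupp.le_def.mp hlea) t
          rw [ha'a] at h3
          have h1 : a t ≠ 0 := Finsupp.mem_support_iff.mp hti
          have h2 : e t ≠ 0 := Finsupp.mem_support_iff.mp htj
          omega
        · have hdisj : Disjoint a'.support a.support := by
            rcases lt_or_gt_of_ne hii with h | h
            · rw [← hgi]
              exact IH i hij (by omega) i' h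
            · rw [← hgi]
              exact (IH i' hi'j (by omega) i h).symm
          have : a' = 0 := by
            ext s
            by_cases hs : s ∈ a'.support
            · exact absurd (Finsupp.support_mono hlea' hs)
                (Finset.disjoint_left.mp hdisj hs)
            · exact Finsupp.notMem_support_iff.mp hs
          exact h0 a' (List.mem_of_mem_take ha') this
    intro i j hi hj hij
    exact key j hj i hij
  · rintro ⟨h0, hp⟩
    constructor
    · rw [RingTheory.Sequence.isWeaklyRegular_iff]
      intro i hi
      have hi' : i < ds.length := by simpa using hi
      rw [List.getElem_map, ← List.map_take, aux_ofList, aux_smul_top, aux_quot_reg]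
      intro x hx
      refine aux_colon ?_ x hx
      intro b hb
      obtain ⟨i', hi'len, hgi⟩ := List.mem_iff_getElem.mp hb
      have hi'i : i' < i := by
        simp [List.length_take] at hi'len
        omega
      rw [List.getElem_take] at hgi
      rw [← hgi]
      exact List.pairwise_iff_getElem.mp hp i' i (by omega) hi' hi'i
    · intro htop
      rw [aux_ofList, aux_smul_top] at htop
      have h1 : (1 : MvPolynomial σ K) ∈
          Ideal.span ((fun a => monomial a (1 : K)) '' {a | a ∈ ds}) := by
        rw [← htop]; trivial
      exact aux_one_not_mem (fun a ha => h0 a ha) h1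

private lemma aux_prod (ds : List (σ →₀ ℕ)) :
    (ds.map (fun d => monomial d (1 : K))).prod = monomial ds.sum (1 : K) := by
  induction ds with
  | nil => simp only [List.map_nil, List.prod_nil, List.sum_nil, monomial_zero', C_1]
  | cons d ds ih => simp [List.prod_cons, ih, monomial_mul]

private lemma aux_support_sum (ds : List (σ →₀ ℕ)) :
    ∀ s ∈ ds.sum.support, ∃ d ∈ ds, s ∈ d.support := by
  classical
  induction ds with
  | nil => simp
  | cons d ds ih =>
    intro s hs
    rw [List.sum_cons] at hs
    rcases Finset.mem_union.mp (Finsupp.support_add hs) with h | h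
    · exact ⟨d, by simp, h⟩
    · obtain ⟨d', hd', h'⟩ := ih s h
      exact ⟨d', by simp [hd'], h'⟩

private lemma aux_sum_ne_zero {ds : List (σ →₀ ℕ)} (hne : ds ≠ []) (h0 : ∀ d ∈ ds, d ≠ 0) :
    ds.sum ≠ 0 := by
  intro h
  obtain ⟨d, hd⟩ := List.exists_mem_of_ne_nil ds hne
  have hle : d ≤ ds.sum := List.single_le_sum (fun x _ => zero_le) d hd
  exact h0 d hd (nonpos_iff_eq_zero.mp (h ▸ hle))

private lemma aux_mem_of_le {I : Ideal (MvPolynomial σ K)} {d e : σ →₀ ℕ} (hde : d ≤ e)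
    (h : monomial d (1 : K) ∈ I) : monomial e (1 : K) ∈ I := by
  have he : monomial e (1 : K) = monomial (e - d) (1 : K) * monomial d 1 := by
    rw [monomial_mul, one_mul, tsub_add_cancel_of_le hde]
  rw [he]
  exact I.mul_mem_left _ h

private lemma aux_forall₂_mem {α β : Type*} {R : α → β → Prop} {l₁ : List α} {l₂ : List β}
    (h : List.Forall₂ R l₁ l₂) : ∀ b ∈ l₂, ∃ a ∈ l₁, R a b := by
  induction h with
  | nil => simp
  | cons hr _ ih =>
    intro b hb
    rcases List.mem_cons.mp hb with rfl | hb'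
    · exact ⟨_, by simp, hr⟩
    · obtain ⟨a, ha, hr'⟩ := ih b hb'
      exact ⟨a, by simp [ha], hr'⟩

private lemma aux_forall₂_pairwise {α β : Type*} {R : α → β → Prop} {P : α → α → Prop}
    {Q : β → β → Prop} (hmono : ∀ a b a' b', R a b → R a' b' → P a a' → Q b b')
    {l₁ : List α} {l₂ : List β} (h : List.Forall₂ R l₁ l₂) :
    l₁.Pairwise P → l₂.Pairwise Q := by
  induction h with
  | nil => intro _; exact List.Pairwise.nil
  | cons hr hfa ih =>
    intro hp
    rw [List.pairwise_cons] at hp ⊢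
    obtain ⟨hhead, htail⟩ := hp
    refine ⟨?_, ih htail⟩
    intro b' hb'
    obtain ⟨a', ha', hr'⟩ := aux_forall₂_mem hfa b' hb'
    exact hmono _ _ _ _ hr hr' (hhead a' ha')

private lemma aux_distribute (ds : List (σ →₀ ℕ)) :
    ∀ m : σ →₀ ℕ, (∀ s ∈ m.support, ∃ d ∈ ds, s ∈ d.support) →
    ∃ es : List (σ →₀ ℕ), es.length = ds.length ∧ es.sum = ds.sum + m ∧
      List.Forall₂ (fun d e => d ≤ e ∧ e.support ⊆ d.support) ds es := by
  classical
  induction ds with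
  | nil =>
    intro m hm
    refine ⟨[], rfl, ?_, List.Forall₂.nil⟩
    have hm0 : m = 0 := Finsupp.support_eq_empty.mp (Finset.eq_empty_of_forall_notMem
      (fun s hs => by obtain ⟨d, hd, _⟩ := hm s hs; exact absurd hd List.not_mem_nil))
    simp [hm0]
  | cons d ds ih =>
    intro m hm
    set m₁ := m.filter (fun s => s ∈ d.support) with hm₁
    set m₂ := m.filter (fun s => ¬ s ∈ d.support) with hm₂
    have hsum : m₁ + m₂ = m := Finsupp.filter_pos_add_filter_neg m _
    have h2 : ∀ s ∈ m₂.support, ∃ d' ∈ ds, s ∈ d'.support := by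
      intro s hs
      rw [hm₂, Finsupp.support_filter, Finset.mem_filter] at hs
      obtain ⟨d', hd', hsd⟩ := hm s hs.1
      rcases List.mem_cons.mp hd' with rfl | h
      · exact absurd hsd hs.2
      · exact ⟨d', h, hsd⟩
    obtain ⟨es, hlen, hsum2, hfa⟩ := ih m₂ h2
    have hm₁supp : m₁.support ⊆ d.support := by
      rw [hm₁, Finsupp.support_filter]
      intro s hs
      exact (Finset.mem_filter.mp hs).2
    refine ⟨(d + m₁) :: es, by simp [hlen], ?_, List.Forall₂.cons ⟨le_add_right le_rfl, ?_⟩ hfa⟩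
    · simp only [List.sum_cons, hsum2, ← hsum]
      abel
    · exact Finsupp.support_add.trans (Finset.union_subset (Finset.Subset.refl _) hm₁supp)
end Aux
section Main
open RingTheory.Sequence

variable {K : Type*} [Field K] {σ : Type*}

private lemma aux_exists_exp (us : List (MvPolynomial σ K))
    (h : ∀ u ∈ us, ∃ a : σ →₀ ℕ, u = monomial a (1 : K)) :
    ∃ ds : List (σ →₀ ℕ), us = ds.map (fun d => monomial d (1 : K)) := by
  induction us with
  | nil => exact ⟨[], rfl⟩
  | cons u us ih =>
    obtain ⟨a, ha⟩ := h u (by simp)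
    obtain ⟨ds, hds⟩ := ih (fun v hv => h v (by simp [hv]))
    exact ⟨a :: ds, by rw [List.map_cons, ← ha, ← hds]⟩

private lemma matchingPower_eq_span (I : Ideal (MvPolynomial σ K)) (k : ℕ) :
    matchingPower I k = Ideal.span ((fun c => monomial c (1 : K)) ''
      {c : σ →₀ ℕ | ∃ ds : List (σ →₀ ℕ), ds.length = k ∧
        (∀ d ∈ ds, monomial d (1 : K) ∈ I) ∧
        RingTheory.Sequence.IsRegular (MvPolynomial σ K)
          (ds.map (fun d => monomial d (1 : K))) ∧
        c = ds.sum}) := by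
  unfold matchingPower
  congr 1
  ext p
  constructor
  · rintro ⟨us, hlen, hmem, hreg, rfl⟩
    obtain ⟨ds, rfl⟩ := aux_exists_exp us (fun u hu => (hmem u hu).2)
    refine ⟨ds.sum, ⟨ds, by simpa using hlen,
      fun d hd => (hmem _ (List.mem_map_of_mem hd)).1, hreg, rfl⟩, (aux_prod ds).symm⟩
  · rintro ⟨c, ⟨ds, hlen, hmem, hreg, rfl⟩, rfl⟩
    refine ⟨ds.map (fun d => monomial d (1 : K)), by simpa using hlen, ?_, hreg,
      (aux_prod ds).symm⟩
    intro u hu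
    obtain ⟨d, hd, rfl⟩ := List.mem_map.mp hu
    exact ⟨hmem d hd, d, rfl⟩

end Main

theorem stmt5 {K : Type*} [Field K] {n : ℕ} (I : Ideal (MvPolynomial (Fin n) K))
    (hI : IsMonomialIdeal I) :
    matchingPower I 2 = matchingProduct I I ∧
    ∀ k : ℕ, 2 ≤ k → matchingPower I k = matchingProduct (matchingPower I (k - 1)) I := by
  classical
  constructor
  · unfold matchingPower matchingProduct
    congr 1
    ext p
    constructor
    · rintro ⟨us, hlen, hmem, hreg, rfl⟩
      obtain ⟨u, v, rfl⟩ := List.length_eq_two.mp hlen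
      obtain ⟨hu, a, rfl⟩ := hmem u (by simp)
      obtain ⟨hv, b, rfl⟩ := hmem v (by simp)
      exact ⟨a, b, hu, hv, hreg, by simp⟩
    · rintro ⟨a, b, ha, hb, hreg, rfl⟩
      refine ⟨[monomial a 1, monomial b 1], rfl, ?_, hreg, by simp⟩
      intro u hu
      rcases List.mem_cons.mp hu with rfl | hu
      · exact ⟨ha, a, rfl⟩
      · rw [List.mem_singleton] at hu
        subst hu
        exact ⟨hb, b, rfl⟩
  · intro k hk
    apply le_antisymm
    · unfold matchingPower
      rw [Ideal.span_le]
      rintro p ⟨us, hlen, hmem, hreg, rfl⟩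
      obtain ⟨ds, rfl⟩ := aux_exists_exp us (fun u hu => (hmem u hu).2)
      rcases List.eq_nil_or_concat' ds with rfl | ⟨ds', b, rfl⟩
      · simp at hlen; omega
      obtain ⟨h0, hpw⟩ := (aux_isRegular_iff _).mp hreg
      rw [List.pairwise_append] at hpw
      obtain ⟨hp1, _, hcross⟩ := hpw
      have hlen' : ds'.length = k - 1 := by
        simp at hlen; omega
      have hne : ds' ≠ [] := by
        intro h; rw [h] at hlen'; simp at hlen'; omega
      have h0' : ∀ d ∈ ds', d ≠ 0 := fun d hd => h0 d (List.mem_append_left _ hd)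
      have hbI : monomial b (1 : K) ∈ I :=
        (hmem _ (List.mem_map_of_mem (List.mem_append_right _ (by simp)))).1
      have hsumI : monomial ds'.sum (1 : K) ∈ matchingPower I (k - 1) := by
        rw [matchingPower_eq_span]
        apply Ideal.subset_span
        exact ⟨ds'.sum, ⟨ds', hlen', fun d hd =>
          (hmem _ (List.mem_map_of_mem (List.mem_append_left _ hd))).1,
          (aux_isRegular_iff _).mpr ⟨h0', hp1⟩, rfl⟩, rfl⟩
      have hdisj : Disjoint (ds'.sum).support b.support := by
        rw [Finset.disjoint_left]
        intro s hs
        obtain ⟨d, hd, hsd⟩ := aux_support_sum ds' s hs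
        exact Finset.disjoint_left.mp (hcross d hd b (by simp)) hsd
      apply Ideal.subset_span
      refine ⟨ds'.sum, b, hsumI, hbI, ?_, ?_⟩
      · have hshow : [monomial ds'.sum (1 : K), monomial b 1]
            = [ds'.sum, b].map (fun d => monomial d (1 : K)) := rfl
        rw [hshow]
        refine (aux_isRegular_iff _).mpr ⟨?_, ?_⟩
        · intro d0 hd0
          simp only [List.mem_cons, List.not_mem_nil, or_false] at hd0
          rcases hd0 with rfl | rfl
          · exact aux_sum_ne_zero hne h0'
          · exact h0 _ (List.mem_append_right _ (List.mem_singleton_self _))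
        · refine List.Pairwise.cons ?_ (List.pairwise_singleton _ _)
          intro b' hb'
          rw [List.mem_singleton] at hb'
          subst hb'
          exact hdisj
      · rw [aux_prod, monomial_mul, one_mul]
        congr 1
        rw [List.sum_append, List.sum_cons, List.sum_nil, add_zero]
    · unfold matchingProduct
      rw [Ideal.span_le]
      rintro p ⟨a, b, haP, hbI, hreg2, rfl⟩
      obtain ⟨h0ab, hpab⟩ := (aux_isRegular_iff _).mp
        (show RingTheory.Sequence.IsRegular _
          ([a, b].map (fun d => monomial d (1 : K))) from hreg2)
      have hb0 : b ≠ 0 := h0ab b (by simp)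
      have hdab : Disjoint a.support b.support := by
        rw [List.pairwise_cons] at hpab
        exact hpab.1 b (by simp)
      rw [matchingPower_eq_span] at haP
      obtain ⟨c, hc, hca⟩ := aux_mon_mem.mp haP
      obtain ⟨ds, hdslen, hdsmem, hdsreg, rfl⟩ := hc
      obtain ⟨hds0, hdsp⟩ := (aux_isRegular_iff _).mp hdsreg
      set m := a - ds.sum with hm_def
      set pr : Fin n → Prop := fun s => ∃ d ∈ ds, s ∈ d.support with hpr
      set m' := m.filter pr with hm'
      set m₀ := m.filter (fun s => ¬ pr s) with hm₀
      have hsplit : m' + m₀ = m := Finsupp.filter_pos_add_filter_neg m pr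
      have hm'h : ∀ s ∈ m'.support, ∃ d ∈ ds, s ∈ d.support := by
        intro s hs
        rw [hm', Finsupp.support_filter, Finset.mem_filter] at hs
        exact hs.2
      obtain ⟨es, heslen, hessum, hfa⟩ := aux_distribute ds m' hm'h
      have hdsuppa : ∀ d ∈ ds, d.support ⊆ a.support := fun d hd =>
        Finsupp.support_mono (le_trans (List.single_le_sum (fun x _ => zero_le) d hd) hca)
      have hm₀d : ∀ s ∈ m₀.support, ∀ d ∈ ds, s ∉ d.support := by
        intro s hs
        rw [hm₀, Finsupp.support_filter, Finset.mem_filter] at hs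
        intro d hd hsd
        exact hs.2 ⟨d, hd, hsd⟩
      unfold matchingPower
      apply Ideal.subset_span
      refine ⟨(es ++ [b + m₀]).map (fun d => monomial d (1 : K)), ?_, ?_, ?_, ?_⟩
      · simp only [List.length_map, List.length_append, List.length_singleton]
        rw [heslen, hdslen]
        omega
      · intro u hu
        obtain ⟨e, he, rfl⟩ := List.mem_map.mp hu
        refine ⟨?_, e, rfl⟩
        rcases List.mem_append.mp he with he | he
        · obtain ⟨d, hd, hde, _⟩ := aux_forall₂_mem hfa e he
          exact aux_mem_of_le hde (hdsmem d hd)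
        · rw [List.mem_singleton] at he
          subst he
          exact aux_mem_of_le (le_add_right le_rfl) hbI
      · refine (aux_isRegular_iff _).mpr ⟨?_, ?_⟩
        · intro e he
          rcases List.mem_append.mp he with he | he
          · obtain ⟨d, hd, hde, _⟩ := aux_forall₂_mem hfa e he
            intro h0e
            exact hds0 d hd (nonpos_iff_eq_zero.mp (h0e ▸ hde))
          · rw [List.mem_singleton] at he
            subst he
            intro h0e
            exact hb0 (nonpos_iff_eq_zero.mp
              (h0e ▸ (le_add_right le_rfl : b ≤ b + m₀)))
        · rw [List.pairwise_append]
          refine ⟨?_, List.pairwise_singleton _ _, ?_⟩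
          · exact aux_forall₂_pairwise
              (fun d e d' e' hde hd'e' hP => hP.mono hde.2 hd'e'.2) hfa hdsp
          · intro e he y hy
            rw [List.mem_singleton] at hy
            subst hy
            obtain ⟨d, hd, _, hsupp⟩ := aux_forall₂_mem hfa e he
            rw [Finset.disjoint_left]
            intro s hse hsb
            have hsd : s ∈ d.support := hsupp hse
            rcases Finset.mem_union.mp (Finsupp.support_add hsb) with h | h
            · exact Finset.disjoint_left.mp hdab (hdsuppa d hd hsd) h
            · exact hm₀d s h d hd hsd
      · rw [aux_prod, monomial_mul, one_mul]
        congr 1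
        rw [List.sum_append, List.sum_cons, List.sum_nil, add_zero, hessum]
        have h1 : ds.sum + m = a := add_tsub_cancel_of_le hca
        have h2 : ds.sum + m' + (b + m₀) = ds.sum + (m' + m₀) + b := by abel
        rw [h2, hsplit, h1]
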